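/- Define Û(s,a) := √(a/(4π))·(1 − √(1 − 2·√(s/a))), the internal energy expressed as a function of entropy s and wall area a. For all real M, r with 0 < 2M < r, setting s₀ := 4πM² and a₀ := 4πr², the one-variable function a ↦ Û(s₀,a) is differentiable at a₀ with derivative equal to −P(M,r), where P(M,r) := (1/(8πr))·((1−M/r)/√(1−2M/r) − 1). -/

import Mathlib

open Real

/-- Internal energy of the Schwarzschild black hole as a function of entropy `s`
and wall area `a`. -/
noncomputable def Uhat (s a : ℝ) : ℝ :=
  Real.sqrt (a / (4 * π)) * (1 - Real.sqrt (1 - 2 * Real.sqrt (s / a)))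

/-- State variable thermodynamically conjugate to the wall area. -/
noncomputable def Pw (M r : ℝ) : ℝ :=
  (1 / (8 * π * r)) * ((1 - M / r) / Real.sqrt (1 - 2 * M / r) - 1)

/-- `P = −∂U(S,A)/∂A` at fixed entropy: the area derivative of the internal energy
`Û(s₀,·)` at `a₀ = 4πr²` equals `−P(M,r)`. -/
theorem area_derivative_of_internal_energy (M r : ℝ) (h0 : 0 < 2 * M) (h1 : 2 * M < r) :
    HasDerivAt (fun a => Uhat (4 * π * M ^ 2) a) (-(Pw M r)) (4 * π * r ^ 2) := by
  have hπ := Real.pi_pos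
  have hM : 0 < M := by linarith
  have hr : 0 < r := by linarith
  set s0 : ℝ := 4 * π * M ^ 2 with hs0
  set a0 : ℝ := 4 * π * r ^ 2 with ha0
  have ha0pos : (0:ℝ) < a0 := by rw [ha0]; positivity
  have hx1 : Real.sqrt (a0 / (4 * π)) = r := by
    rw [ha0, show 4 * π * r ^ 2 / (4 * π) = r ^ 2 by field_simp]
    exact Real.sqrt_sq hr.le
  have hx2 : Real.sqrt (s0 / a0) = M / r := by
    rw [hs0, ha0, show 4 * π * M ^ 2 / (4 * π * r ^ 2) = (M / r) ^ 2 by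
      field_simp]
    exact Real.sqrt_sq (by positivity)
  have hqpos : (0:ℝ) < 1 - 2 * (M / r) := by
    have : 2 * (M / r) < 1 := by rw [mul_div_assoc'] at *; rw [div_lt_one hr]; linarith
    linarith
  set q : ℝ := Real.sqrt (1 - 2 * (M / r)) with hq
  have hqpos' : 0 < q := Real.sqrt_pos.mpr hqpos
  have hqsq : q ^ 2 = 1 - 2 * (M / r) := Real.sq_sqrt hqpos.le
  have hq' : Real.sqrt (1 - 2 * M / r) = q := by rw [hq, mul_div_assoc]
  -- derivative pieces
  have d1 : HasDerivAt (fun a : ℝ => a / (4 * π)) (1 / (4 * π)) a0 := by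
    simpa using (hasDerivAt_id a0).div_const (4 * π)
  have d2 : HasDerivAt (fun a : ℝ => Real.sqrt (a / (4 * π)))
      ((1 / (4 * π)) / (2 * Real.sqrt (a0 / (4 * π)))) a0 := by
    apply d1.sqrt
    rw [show a0 / (4 * π) = r ^ 2 by rw [ha0]; field_simp]
    positivity
  have d3 : HasDerivAt (fun a : ℝ => s0 / a) (s0 * (-(a0 ^ 2)⁻¹)) a0 := by
    simpa [div_eq_mul_inv] using (hasDerivAt_inv ha0pos.ne').const_mul s0
  have d4 : HasDerivAt (fun a : ℝ => Real.sqrt (s0 / a))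
      ((s0 * (-(a0 ^ 2)⁻¹)) / (2 * Real.sqrt (s0 / a0))) a0 := by
    apply d3.sqrt
    rw [show s0 / a0 = (M / r) ^ 2 by rw [hs0, ha0]; field_simp]
    positivity
  have d5 : HasDerivAt (fun a : ℝ => 1 - 2 * Real.sqrt (s0 / a))
      (0 - 2 * ((s0 * (-(a0 ^ 2)⁻¹)) / (2 * Real.sqrt (s0 / a0)))) a0 :=
    (hasDerivAt_const a0 1).sub (d4.const_mul 2)
  have d6 : HasDerivAt (fun a : ℝ => Real.sqrt (1 - 2 * Real.sqrt (s0 / a)))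
      ((0 - 2 * ((s0 * (-(a0 ^ 2)⁻¹)) / (2 * Real.sqrt (s0 / a0)))) /
        (2 * Real.sqrt (1 - 2 * Real.sqrt (s0 / a0)))) a0 := by
    apply d5.sqrt
    rw [hx2]; positivity
  have d7 : HasDerivAt (fun a : ℝ => 1 - Real.sqrt (1 - 2 * Real.sqrt (s0 / a)))
      (0 - ((0 - 2 * ((s0 * (-(a0 ^ 2)⁻¹)) / (2 * Real.sqrt (s0 / a0)))) /
        (2 * Real.sqrt (1 - 2 * Real.sqrt (s0 / a0))))) a0 :=
    (hasDerivAt_const a0 1).sub d6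
  have d8 := d2.mul d7
  have heq : (fun a => Uhat s0 a) = fun a : ℝ =>
      Real.sqrt (a / (4 * π)) * (1 - Real.sqrt (1 - 2 * Real.sqrt (s0 / a))) := by
    funext a; rfl
  rw [heq]
  refine d8.congr_deriv ?_; symm
  rw [hx1, hx2, Pw, hq']
  rw [← hq]
  have ha0' : a0 ^ 2 = 16 * π ^ 2 * r ^ 4 := by rw [ha0]; ring
  rw [ha0', hs0]
  clear d1 d2 d3 d4 d5 d6 d7 d8 heq hx1 hx2 hq' ha0' ha0pos
  clear_value q s0 a0
  clear hq hs0 ha0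
  have hMq : M = r * (1 - q ^ 2) / 2 := by
    have := hqsq
    field_simp at this
    linarith
  subst hMq
  have h1q : (1:ℝ) - q ^ 2 ≠ 0 := by
    have : q ^ 2 < 1 := by nlinarith
    nlinarith
  field_simp
  ring
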